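/- arXiv:math/9401201 — 2 statements merged into one kernel-verified Lean document; each statement's English description precedes it below -/
import Mathlib

section
/- Let G be an abelian group with finite monoid generating set A = {a₁,…,a_m}. There exists k such that for every non-geodesic word u over A there is a tuple n = (n₁,…,n_m) with n ≤ n(u) componentwise and Σᵢ nᵢ ≤ k such that the word a₁^{n₁}⋯a_m^{n_m} is non-geodesic, where n(u) records the number of occurrences of each letter aᵢ in u. -/
/-! Words over a finite monoid generating set of a group, word length,
directed Cayley-graph distance, paths, asynchronous fellow travelling,
and the falsification-by-fellow-traveller property. -/

variable {A G : Type*} [Group G]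

/-- The value in `G` of a word over the alphabet `A`. -/
def evalWord (π : A → G) (w : List A) : G := (w.map π).prod

/-- `π : A → G` is a monoid generating set: every element is the value of a word. -/
def Generates (π : A → G) : Prop := ∀ g : G, ∃ w : List A, evalWord π w = g

/-- Word length of a group element: the least length of a word representing it. -/
noncomputable def wordLen (π : A → G) (g : G) : ℕ :=
  sInf {n | ∃ w : List A, evalWord π w = g ∧ w.length = n}

/-- Directed Cayley graph distance. -/
noncomputable def cayleyDist (π : A → G) (g h : G) : ℕ := wordLen π (g⁻¹ * h)

/-- The path in the Cayley graph determined by a word (constant after the end). -/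
def pathOf (π : A → G) (w : List A) (t : ℕ) : G := evalWord π (w.take t)

/-- A word is geodesic if its length is the word length of its value. -/
noncomputable def IsGeodesicWord (π : A → G) (w : List A) : Prop :=
  w.length = wordLen π (evalWord π w)

/-- `q` asynchronously `δ`-tracks `p`: there is a monotone proper
reparametrization `f` with `d(p t, q (f t)) ≤ δ` for all `t`. -/
def AsyncTracks (π : A → G) (δ : ℕ) (p q : ℕ → G) : Prop :=
  ∃ f : ℕ → ℕ, Monotone f ∧ (∀ N : ℕ, ∃ t, N ≤ f t) ∧
    ∀ t, cayleyDist π (p t) (q (f t)) ≤ δ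

/-- Two paths asynchronously `δ`-fellow travel. -/
def AsyncFellow (π : A → G) (δ : ℕ) (p q : ℕ → G) : Prop :=
  AsyncTracks π δ p q ∧ AsyncTracks π δ q p

/-- The falsification by fellow traveller property with constant `δ`:
every non-geodesic word is asynchronously `δ`-fellow travelled by a strictly
shorter word with the same value. -/
noncomputable def FFTP (π : A → G) (δ : ℕ) : Prop :=
  ∀ w : List A, ¬ IsGeodesicWord π w →
    ∃ v : List A, evalWord π v = evalWord π w ∧ v.length < w.length ∧
      AsyncFellow π δ (pathOf π w) (pathOf π v)

/-! In a commutative group the value and the length of a word depend only on its letter counts,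
so whether a word is geodesic is a property of its exponent tuple in `ℕ^m`. Below every
non-geodesic tuple lies a minimal one, and by Dickson's lemma the minimal non-geodesic tuples
form a finite antichain; their largest coordinate sum is the bound `k`. -/

theorem exists_bounded_le_of_wellQuasiOrderedLE {α β : Type*} [PartialOrder α]
    [WellQuasiOrderedLE α] [Preorder β] [IsDirectedOrder β] [Nonempty β]
    (P : α → Prop) (f : α → β) :
    ∃ k, ∀ x, P x → ∃ y ≤ x, P y ∧ f y ≤ k := by
  have hpwo := Set.isPWO_of_wellQuasiOrderedLE {x | P x}
  have hfinite : {x | Minimal P x}.Finite :=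
    (setOfPred_minimal_antichain P).finite_of_partiallyWellOrderedOn
      (hpwo.mono (setOfPred_minimal_subset P))
  obtain ⟨k, hk⟩ := (hfinite.image f).bddAbove
  refine ⟨k, fun x hx => ?_⟩
  obtain ⟨y, hyx, hy⟩ := hpwo.exists_le_minimal hx
  exact ⟨y, hyx, hy.prop, hk (Set.mem_image_of_mem f hy)⟩

section CommGroup

variable {A G : Type*} [CommGroup G]

theorem List.Perm.isGeodesicWord_iff (π : A → G) {u v : List A} (h : u.Perm v) :
    IsGeodesicWord π u ↔ IsGeodesicWord π v := by
  rw [IsGeodesicWord, IsGeodesicWord, evalWord, evalWord, (h.map π).prod_eq, h.length_eq]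

end CommGroup

def monomialWord {m : ℕ} (n : Fin m → ℕ) : List (Fin m) :=
  (List.finRange m).flatMap fun i => List.replicate (n i) i

theorem count_monomialWord {m : ℕ} (n : Fin m → ℕ) (i : Fin m) :
    (monomialWord n).count i = n i := by
  simp [monomialWord, List.count_flatMap, Function.comp_def, List.count_replicate,
    List.sum_map_ite, List.filter_eq, List.count_finRange]

theorem perm_monomialWord_count {m : ℕ} (u : List (Fin m)) :
    u.Perm (monomialWord fun i => u.count i) :=
  List.perm_iff_count.2 fun i => (count_monomialWord (fun j => u.count j) i).symm

theorem abelian_nongeodesic_bounded_witness_general {m : ℕ} {G : Type*} [CommGroup G]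
    (π : Fin m → G) :
    ∃ k : ℕ, ∀ u : List (Fin m), ¬ IsGeodesicWord π u →
      ∃ n : Fin m → ℕ, (∀ i, n i ≤ u.count i) ∧ (∑ i, n i) ≤ k ∧
        ¬ IsGeodesicWord π ((List.finRange m).flatMap fun i => List.replicate (n i) i) := by
  obtain ⟨k, hk⟩ := exists_bounded_le_of_wellQuasiOrderedLE
    (fun n => ¬ IsGeodesicWord π (monomialWord n)) (fun n => ∑ i, n i)
  refine ⟨k, fun u hu => ?_⟩
  obtain ⟨n, hnu, hn, hnk⟩ :=
    hk (fun i => u.count i) (by rwa [← (perm_monomialWord_count u).isGeodesicWord_iff π])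
  exact ⟨n, hnu, hnk, hn⟩

/-- Key combinatorial claim of Proposition 4.4: in an abelian group with monoid
generating set a₁,…,a_m, there is a bound k such that every non-geodesic word u
admits a componentwise smaller exponent tuple n with ∑ nᵢ ≤ k for which the word
a₁^{n₁}⋯a_m^{n_m} is already non-geodesic. -/
theorem abelian_nongeodesic_bounded_witness {m : ℕ} {G : Type*} [CommGroup G]
    (π : Fin m → G) (hgen : Generates π) :
    ∃ k : ℕ, ∀ u : List (Fin m), ¬ IsGeodesicWord π u →
      ∃ n : Fin m → ℕ, (∀ i, n i ≤ u.count i) ∧ (∑ i, n i) ≤ k ∧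
        ¬ IsGeodesicWord π ((List.finRange m).flatMap fun i => List.replicate (n i) i) :=
  abelian_nongeodesic_bounded_witness_general π
end

section
/- Let A be a finite monoid generating set of a group G with the falsification by fellow traveller property (constant δ). If L ⊆ A* is an automatic structure on G that is almost geodesic, i.e., there is K such that every u ∈ L has length at most K more than a geodesic representative of ū, then there exists a geodesic automatic structure L′ ⊆ A* equivalent to L. -/
/-! Words over a finite monoid generating set of a group, word length,
directed Cayley-graph distance, paths, asynchronous fellow travelling,
and the falsification-by-fellow-traveller property. -/

variable {A G : Type*} [Group G]

/-- The synchronous fellow traveller property with constant `δ` for a language: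
words whose values differ by at most one generator stay uniformly `δ`-close with
identical parametrization. -/
noncomputable def SyncFT (π : A → G) (δ : ℕ) (L : Language A) : Prop :=
  ∀ u ∈ L, ∀ v ∈ L,
    ((∃ a : A, evalWord π v = evalWord π u * π a) ∨ evalWord π v = evalWord π u) →
    ∀ t, cayleyDist π (pathOf π u t) (pathOf π v t) ≤ δ

/-- An automatic structure: a regular normal form with the synchronous fellow
traveller property. -/
noncomputable def IsAutomaticStructure (π : A → G) (L : Language A) : Prop :=
  Language.IsRegular L ∧ (∀ g : G, ∃ w ∈ L, evalWord π w = g) ∧ ∃ δ : ℕ, SyncFT π δ L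

/-- Equivalence of structures: words with the same value asynchronously fellow
travel at a uniformly bounded distance. -/
noncomputable def EquivStructures (π : A → G) (L L' : Language A) : Prop :=
  ∃ δ : ℕ, ∀ u v : List A, ((u ∈ L ∧ v ∈ L') ∨ (u ∈ L' ∧ v ∈ L)) →
    evalWord π u = evalWord π v → AsyncFellow π δ (pathOf π u) (pathOf π v)

/-! Iterating FFTP moves a word of length excess `j` to a geodesic with the same value that it
asynchronously `jδ`-fellow travels. Both words being almost geodesic, the reparametrization stays
near the identity, so the fellow travelling is synchronous, with a constant depending only on `j`.

Two regular languages come out of this. A word is geodesic iff none of its prefixes has a shorter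
synchronous fellow traveller with the same value (look at the first non-geodesic prefix). And the
words synchronously fellow travelling a word of `L` with the same value form a regular language.
Their intersection `L'` surjects onto `G` by the above applied to the words of `L`, and
synchronous fellow travelling with `L` transfers the fellow traveller property and gives the
equivalence. Regularity is Myhill–Nerode: the left quotient at `x` of a language of synchronous
fellow travellers only depends on which pairs (left quotient of the guessed language, offset in a
ball of radius `D`) are reachable along `x`, and there are finitely many such sets. -/

@[simp]
lemma evalWord_nil (π : A → G) : evalWord π [] = 1 := rfl

@[simp]
lemma evalWord_cons (π : A → G) (a : A) (w : List A) :
    evalWord π (a :: w) = π a * evalWord π w := by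
  simp [evalWord]

@[simp]
lemma evalWord_singleton (π : A → G) (a : A) : evalWord π [a] = π a := by
  simp [evalWord]

@[simp]
lemma evalWord_append (π : A → G) (u v : List A) :
    evalWord π (u ++ v) = evalWord π u * evalWord π v := by
  simp [evalWord]

@[simp]
lemma pathOf_zero (π : A → G) (w : List A) : pathOf π w 0 = 1 := rfl

lemma pathOf_append (π : A → G) (x y : List A) (t : ℕ) :
    pathOf π (x ++ y) t = pathOf π x t * pathOf π y (t - x.length) := by
  simp [pathOf, List.take_append]

lemma pathOf_of_length_le (π : A → G) {w : List A} {t : ℕ} (h : w.length ≤ t) :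
    pathOf π w t = evalWord π w := by
  rw [pathOf, List.take_of_length_le h]

lemma pathOf_min_length (π : A → G) (w : List A) (t : ℕ) :
    pathOf π w (min t w.length) = pathOf π w t := by
  rw [pathOf, pathOf, ← List.take_eq_take_min]

section WordLength

variable {π : A → G}

lemma wordLen_le_length (π : A → G) (w : List A) : wordLen π (evalWord π w) ≤ w.length :=
  Nat.sInf_le ⟨w, rfl, rfl⟩

lemma wordLen_one (π : A → G) : wordLen π 1 = 0 :=
  Nat.le_zero.mp (wordLen_le_length π [])

lemma exists_length_eq_wordLen (hgen : Generates π) (g : G) :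
    ∃ w, evalWord π w = g ∧ w.length = wordLen π g :=
  let ⟨w, hw⟩ := hgen g
  Nat.sInf_mem (s := {n | ∃ w, evalWord π w = g ∧ w.length = n}) ⟨w.length, w, hw, rfl⟩

lemma wordLen_mul_le (hgen : Generates π) (g h : G) :
    wordLen π (g * h) ≤ wordLen π g + wordLen π h := by
  obtain ⟨u, rfl, hu⟩ := exists_length_eq_wordLen hgen g
  obtain ⟨v, rfl, hv⟩ := exists_length_eq_wordLen hgen h
  rw [← hu, ← hv, ← evalWord_append]
  simpa using wordLen_le_length π (u ++ v)

lemma finite_setOf_wordLen_le [Finite A] (hgen : Generates π) (D : ℕ) :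
    {g : G | wordLen π g ≤ D}.Finite := by
  refine ((List.finite_length_le A D).image (evalWord π)).subset fun g hg => ?_
  obtain ⟨w, hw, hl⟩ := exists_length_eq_wordLen hgen g
  exact ⟨w, by simpa [hl] using hg, hw⟩

/-- Reversing a directed distance costs at most this factor. -/
noncomputable def invConst [Fintype A] (π : A → G) : ℕ :=
  Finset.univ.sup fun a => wordLen π (π a)⁻¹

lemma wordLen_inv_generator_le [Fintype A] (π : A → G) (a : A) :
    wordLen π (π a)⁻¹ ≤ invConst π :=
  Finset.le_sup (f := fun a => wordLen π (π a)⁻¹) (Finset.mem_univ a)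

lemma wordLen_inv_le [Fintype A] (hgen : Generates π) (g : G) :
    wordLen π g⁻¹ ≤ invConst π * wordLen π g := by
  obtain ⟨w, rfl, hw⟩ := exists_length_eq_wordLen hgen g
  rw [← hw]
  clear hw
  induction w with
  | nil => simp [wordLen_one]
  | cons a w ih =>
    calc wordLen π (evalWord π (a :: w))⁻¹
        = wordLen π ((evalWord π w)⁻¹ * (π a)⁻¹) := by simp
      _ ≤ wordLen π (evalWord π w)⁻¹ + wordLen π (π a)⁻¹ := wordLen_mul_le hgen _ _
      _ ≤ invConst π * w.length + invConst π :=
        add_le_add ih (wordLen_inv_generator_le π a)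
      _ = invConst π * (a :: w).length := by simp [mul_add]

lemma cayleyDist_self (π : A → G) (g : G) : cayleyDist π g g = 0 := by
  simp [cayleyDist, wordLen_one]

lemma cayleyDist_mul_mul (π : A → G) (g h a b : G) :
    cayleyDist π (g * a) (h * b) = cayleyDist π a (g⁻¹ * h * b) := by
  simp only [cayleyDist]
  congr 1
  group

lemma cayleyDist_triangle (hgen : Generates π) (x y z : G) :
    cayleyDist π x z ≤ cayleyDist π x y + cayleyDist π y z := by
  simpa [cayleyDist, mul_assoc] using wordLen_mul_le hgen (x⁻¹ * y) (y⁻¹ * z)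

lemma cayleyDist_comm_le [Fintype A] (hgen : Generates π) (x y : G) :
    cayleyDist π y x ≤ invConst π * cayleyDist π x y := by
  simpa [cayleyDist] using wordLen_inv_le hgen (x⁻¹ * y)

lemma wordLen_le_add_cayleyDist (hgen : Generates π) (x y : G) :
    wordLen π y ≤ wordLen π x + cayleyDist π x y := by
  simpa [cayleyDist] using wordLen_mul_le hgen x (x⁻¹ * y)

lemma cayleyDist_pathOf_le (π : A → G) (w : List A) {s t : ℕ} (h : s ≤ t) :
    cayleyDist π (pathOf π w s) (pathOf π w t) ≤ t - s := by
  obtain ⟨n, rfl⟩ := Nat.exists_eq_add_of_le h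
  rw [pathOf, pathOf, List.take_add, evalWord_append, cayleyDist, inv_mul_cancel_left]
  simpa using (wordLen_le_length π _).trans (List.length_take_le _ _)

end WordLength

section Geodesics

variable {π : A → G} {v w : List A}

lemma isGeodesicWord_nil : IsGeodesicWord π [] := by
  simp [IsGeodesicWord, wordLen_one]

lemma length_add_wordLen_append_le (hgen : Generates π) (p r : List A) :
    p.length + wordLen π (evalWord π (p ++ r)) ≤ wordLen π (evalWord π p) + (p ++ r).length := by
  have := wordLen_mul_le hgen (evalWord π p) (evalWord π r)
  have := wordLen_le_length π r
  simp only [evalWord_append, List.length_append]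
  omega

lemma IsGeodesicWord.take (hgen : Generates π) (hw : IsGeodesicWord π w) (n : ℕ) :
    IsGeodesicWord π (w.take n) := by
  have := length_add_wordLen_append_le hgen (w.take n) (w.drop n)
  have := wordLen_le_length π (w.take n)
  rw [List.take_append_drop] at *
  unfold IsGeodesicWord at *
  omega

lemma IsGeodesicWord.wordLen_pathOf (hgen : Generates π) (hw : IsGeodesicWord π w) (t : ℕ) :
    wordLen π (pathOf π w t) = min t w.length := by
  rw [pathOf, ← hw.take hgen t, List.length_take]

lemma IsGeodesicWord.length_le (hv : IsGeodesicWord π v) (he : evalWord π v = evalWord π w) :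
    v.length ≤ w.length := by
  rw [hv, he]
  exact wordLen_le_length π w

lemma IsGeodesicWord.length_lt (hv : IsGeodesicWord π v) (he : evalWord π v = evalWord π w)
    (hw : ¬ IsGeodesicWord π w) : v.length < w.length := by
  refine (hv.length_le he).lt_of_ne fun h => hw ?_
  rw [IsGeodesicWord, ← h, ← he]
  exact hv

end Geodesics

def SyncTracks (π : A → G) (D : ℕ) (p q : ℕ → G) : Prop :=
  ∀ t, cayleyDist π (p t) (q t) ≤ D

section Tracking

variable {π : A → G} {D D₁ D₂ : ℕ} {p q r : ℕ → G}

lemma syncTracks_refl (π : A → G) (p : ℕ → G) : SyncTracks π 0 p p := fun t => by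
  simp [cayleyDist_self]

lemma SyncTracks.mono (h : SyncTracks π D₁ p q) (hD : D₁ ≤ D₂) : SyncTracks π D₂ p q :=
  fun t => (h t).trans hD

lemma SyncTracks.trans (hgen : Generates π) (h₁ : SyncTracks π D₁ p q)
    (h₂ : SyncTracks π D₂ q r) : SyncTracks π (D₁ + D₂) p r :=
  fun t => (cayleyDist_triangle hgen _ _ _).trans (add_le_add (h₁ t) (h₂ t))

lemma SyncTracks.symm [Fintype A] (hgen : Generates π) (h : SyncTracks π D p q) :
    SyncTracks π (invConst π * D) q p :=
  fun t => (cayleyDist_comm_le hgen _ _).trans (Nat.mul_le_mul_left _ (h t))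

lemma SyncTracks.asyncTracks (h : SyncTracks π D p q) : AsyncTracks π D p q :=
  ⟨id, monotone_id, fun N => ⟨N, le_rfl⟩, h⟩

lemma AsyncTracks.trans (hgen : Generates π) (h₁ : AsyncTracks π D₁ p q)
    (h₂ : AsyncTracks π D₂ q r) : AsyncTracks π (D₁ + D₂) p r := by
  obtain ⟨f, hf, hf_top, hpq⟩ := h₁
  obtain ⟨g, hg, hg_top, hqr⟩ := h₂
  refine ⟨g ∘ f, hg.comp hf, fun N => ?_, fun t => ?_⟩
  · obtain ⟨s, hs⟩ := hg_top N
    obtain ⟨t, ht⟩ := hf_top s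
    exact ⟨t, hs.trans (hg ht)⟩
  · exact (cayleyDist_triangle hgen _ _ _).trans (add_le_add (hpq t) (hqr (f t)))

lemma AsyncFellow.symm {δ : ℕ} (h : AsyncFellow π δ p q) : AsyncFellow π δ q p :=
  ⟨h.2, h.1⟩

end Tracking

section Synchronisation

variable {π : A → G} {δ : ℕ}

lemma exists_geodesic_asyncTracks (hgen : Generates π) (hfftp : FFTP π δ) (j : ℕ) {w : List A}
    (hw : w.length ≤ wordLen π (evalWord π w) + j) :
    ∃ v, IsGeodesicWord π v ∧ evalWord π v = evalWord π w ∧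
      AsyncTracks π (j * δ) (pathOf π w) (pathOf π v) := by
  induction j generalizing w with
  | zero =>
    exact ⟨w, le_antisymm (by omega) (wordLen_le_length π w), rfl,
      ((syncTracks_refl π _).mono (Nat.zero_le _)).asyncTracks⟩
  | succ j ih =>
    by_cases hgeo : IsGeodesicWord π w
    · exact ⟨w, hgeo, rfl, ((syncTracks_refl π _).mono (Nat.zero_le _)).asyncTracks⟩
    obtain ⟨v₁, he₁, hshorter, hfellow⟩ := hfftp w hgeo
    obtain ⟨v, hv, he, htracks⟩ := ih (w := v₁) (by rw [he₁]; omega)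
    refine ⟨v, hv, he.trans he₁, ?_⟩
    rw [Nat.succ_mul, add_comm]
    exact hfellow.1.trans hgen htracks

lemma syncTracks_of_asyncTracks [Fintype A] (hgen : Generates π) {j : ℕ} {w v : List A}
    (hv : IsGeodesicWord π v) (he : evalWord π v = evalWord π w)
    (hw : w.length ≤ wordLen π (evalWord π w) + j)
    (h : AsyncTracks π δ (pathOf π w) (pathOf π v)) :
    SyncTracks π ((invConst π + 1) * δ + j) (pathOf π w) (pathOf π v) := by
  obtain ⟨f, -, -, hf⟩ := h
  intro t
  set C := invConst π
  set s := min (f t) v.length with hs_def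
  set r := min t v.length with hr_def
  set ℓ := wordLen π (pathOf π w t)
  have hs : wordLen π (pathOf π v s) = s := by rw [hv.wordLen_pathOf hgen]; omega
  have hws : cayleyDist π (pathOf π w t) (pathOf π v s) ≤ δ := by
    rw [pathOf_min_length]; exact hf t
  have hℓ_le : ℓ ≤ t := (wordLen_le_length π _).trans (List.length_take_le _ _)
  have hle_ℓ : min t w.length ≤ ℓ + j := by
    have := length_add_wordLen_append_le hgen (w.take t) (w.drop t)
    rw [List.take_append_drop, List.length_take] at this
    change min t w.length + wordLen π (evalWord π w) ≤ ℓ + w.length at this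
    omega
  have hvw : v.length ≤ w.length := hv.length_le he
  have hsℓ : s ≤ ℓ + δ := by
    have := wordLen_le_add_cayleyDist hgen (pathOf π w t) (pathOf π v s)
    omega
  have hℓs : ℓ ≤ s + C * δ := by
    have := wordLen_le_add_cayleyDist hgen (pathOf π v s) (pathOf π w t)
    have := (cayleyDist_comm_le hgen _ _).trans (Nat.mul_le_mul_left C hws)
    omega
  have hsr : cayleyDist π (pathOf π v s) (pathOf π v r) ≤ C * δ + j := by
    rcases le_total s r with hle | hle
    · exact (cayleyDist_pathOf_le π v hle).trans (by omega)
    · calc cayleyDist π (pathOf π v s) (pathOf π v r)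
          ≤ C * (s - r) := (cayleyDist_comm_le hgen _ _).trans
            (Nat.mul_le_mul_left C (cayleyDist_pathOf_le π v hle))
        _ ≤ C * δ + j := le_add_right (Nat.mul_le_mul_left C (by omega))
  calc cayleyDist π (pathOf π w t) (pathOf π v t)
      = cayleyDist π (pathOf π w t) (pathOf π v r) := by rw [pathOf_min_length]
    _ ≤ δ + (C * δ + j) := (cayleyDist_triangle hgen _ (pathOf π v s) _).trans
        (add_le_add hws hsr)
    _ = (C + 1) * δ + j := by ring

lemma exists_syncTracks_geodesic [Fintype A] (hgen : Generates π) (hfftp : FFTP π δ) (j : ℕ) :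
    ∃ D, ∀ w : List A, w.length ≤ wordLen π (evalWord π w) + j →
      ∃ v, IsGeodesicWord π v ∧ evalWord π v = evalWord π w ∧
        SyncTracks π D (pathOf π w) (pathOf π v) := by
  refine ⟨(invConst π + 1) * (j * δ) + j, fun w hw => ?_⟩
  obtain ⟨v, hv, he, h⟩ := exists_geodesic_asyncTracks hgen hfftp j hw
  exact ⟨v, hv, he, syncTracks_of_asyncTracks hgen hv he hw h⟩

end Synchronisation

namespace Language

variable {α β : Type*} {S : Language α}

lemma isRegular_of_leftQuotient_eq {L : Language α} (Φ : List α → β) (F : β → Language α)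
    (hΦ : (Set.range Φ).Finite) (h : ∀ x, L.leftQuotient x = F (Φ x)) : L.IsRegular := by
  refine .of_finite_range_leftQuotient ?_
  rw [show L.leftQuotient = F ∘ Φ from funext h, Set.range_comp]
  exact hΦ.image F

lemma isRegular_setOf_mem (a : α) : Language.IsRegular ({u | a ∈ u} : Language α) :=
  isRegular_of_leftQuotient_eq (fun x => a ∈ x) (fun b => {y | b ∨ a ∈ y}) (Set.toFinite _)
    fun _ => Set.ext fun _ => List.mem_append

def avoidingPrefixes (S : Language α) : Language α :=
  {w | ∀ n, w.take n ∉ S}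

lemma append_mem_avoidingPrefixes_iff {x y : List α} :
    x ++ y ∈ avoidingPrefixes S ↔
      x ∈ avoidingPrefixes S ∧ y ∈ avoidingPrefixes (S.leftQuotient x) := by
  refine ⟨fun h => ⟨fun n => ?_, fun m => ?_⟩, fun ⟨hx, hy⟩ n => ?_⟩
  · simpa [List.take_append_of_le_length (min_le_right n x.length), ← List.take_eq_take_min]
      using h (min n x.length)
  · simpa [List.take_append, List.take_of_length_le (Nat.le_add_right _ _)]
      using h (x.length + m)
  · rw [List.take_append]
    rcases le_total n x.length with hn | hn
    · simpa [Nat.sub_eq_zero_of_le hn] using hx n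
    · simpa [List.take_of_length_le hn] using hy (n - x.length)

lemma IsRegular.avoidingPrefixes (hS : S.IsRegular) : (avoidingPrefixes S).IsRegular := by
  refine isRegular_of_leftQuotient_eq
    (fun x => (x ∈ Language.avoidingPrefixes S, S.leftQuotient x))
    (fun p => {y | p.1 ∧ y ∈ Language.avoidingPrefixes p.2})
    ((Set.finite_univ.prod hS.finite_range_leftQuotient).subset ?_)
    fun x => Set.ext fun y => append_mem_avoidingPrefixes_iff
  rintro _ ⟨x, rfl⟩
  exact ⟨trivial, x, rfl⟩

end Language

section SyncLanguages

variable {B : Type*} {π : A → G} {ρ : B → G} {N : Language B} {D : ℕ}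
  {Acc : Language B → G → Prop}

/-- The guessed word `u` enters only through the left quotient `N.leftQuotient u` and the offset
of the endpoints, which is what makes these languages regular. -/
def syncLang (π : A → G) (ρ : B → G) (N : Language B) (D : ℕ) (Acc : Language B → G → Prop) :
    Language A :=
  {w | ∃ u : List B, u.length = w.length ∧ SyncTracks π D (pathOf π w) (pathOf ρ u) ∧
    Acc (N.leftQuotient u) ((evalWord π w)⁻¹ * evalWord ρ u)}

lemma syncTracks_append_iff {x y : List A} {u₁ u₂ : List B} (h : u₁.length = x.length) :
    SyncTracks π D (pathOf π (x ++ y)) (pathOf ρ (u₁ ++ u₂)) ↔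
      SyncTracks π D (pathOf π x) (pathOf ρ u₁) ∧
        SyncTracks π D (pathOf π y) fun s => (evalWord π x)⁻¹ * evalWord ρ u₁ * pathOf ρ u₂ s := by
  simp only [SyncTracks, pathOf_append, h]
  refine ⟨fun H => ⟨fun t => ?_, fun s => ?_⟩, fun ⟨H₁, H₂⟩ t => ?_⟩
  · rw [← pathOf_min_length π x, ← pathOf_min_length ρ u₁, h]
    simpa using H (min t x.length)
  · simpa [pathOf_of_length_le, h, cayleyDist_mul_mul, mul_assoc] using H (x.length + s)
  · rcases le_total t x.length with ht | ht
    · simpa [Nat.sub_eq_zero_of_le ht] using H₁ t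
    · rw [pathOf_of_length_le π ht, pathOf_of_length_le ρ (h ▸ ht), cayleyDist_mul_mul]
      exact H₂ _

lemma append_mem_syncLang_iff {x y : List A} :
    x ++ y ∈ syncLang π ρ N D Acc ↔
      ∃ u₁ : List B, u₁.length = x.length ∧ SyncTracks π D (pathOf π x) (pathOf ρ u₁) ∧
        ∃ u₂ : List B, u₂.length = y.length ∧
          SyncTracks π D (pathOf π y)
            (fun s => (evalWord π x)⁻¹ * evalWord ρ u₁ * pathOf ρ u₂ s) ∧
          Acc ((N.leftQuotient u₁).leftQuotient u₂)
            ((evalWord π y)⁻¹ * ((evalWord π x)⁻¹ * evalWord ρ u₁) * evalWord ρ u₂) := by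
  have hval (u₁ u₂ : List B) : (evalWord π (x ++ y))⁻¹ * evalWord ρ (u₁ ++ u₂) =
      (evalWord π y)⁻¹ * ((evalWord π x)⁻¹ * evalWord ρ u₁) * evalWord ρ u₂ := by
    simp only [evalWord_append]; group
  constructor
  · rintro ⟨u, hu, hs, hacc⟩
    have hu₁ : (u.take x.length).length = x.length := by simp [hu]
    rw [← List.take_append_drop x.length u, syncTracks_append_iff hu₁] at hs
    rw [← List.take_append_drop x.length u, hval, Language.leftQuotient_append] at hacc
    exact ⟨_, hu₁, hs.1, _, by simp [hu], hs.2, hacc⟩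
  · rintro ⟨u₁, hu₁, hs₁, u₂, hu₂, hs₂, hacc⟩
    refine ⟨u₁ ++ u₂, by simp [hu₁, hu₂], (syncTracks_append_iff hu₁).2 ⟨hs₁, hs₂⟩, ?_⟩
    rwa [hval, Language.leftQuotient_append]

lemma isRegular_syncLang [Finite A] (hgen : Generates π) (hN : N.IsRegular) (D : ℕ)
    (Acc : Language B → G → Prop) : (syncLang π ρ N D Acc).IsRegular := by
  refine Language.isRegular_of_leftQuotient_eq
    (fun x => {p | ∃ u₁ : List B, u₁.length = x.length ∧
      SyncTracks π D (pathOf π x) (pathOf ρ u₁) ∧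
      (N.leftQuotient u₁, (evalWord π x)⁻¹ * evalWord ρ u₁) = p})
    (fun P => {y | ∃ p ∈ P, ∃ u₂ : List B, u₂.length = y.length ∧
      SyncTracks π D (pathOf π y) (fun s => p.2 * pathOf ρ u₂ s) ∧
      Acc (p.1.leftQuotient u₂) ((evalWord π y)⁻¹ * p.2 * evalWord ρ u₂)})
    ((hN.finite_range_leftQuotient.prod (finite_setOf_wordLen_le hgen D)).finite_subsets.subset ?_)
    fun x => Set.ext fun y => ?_
  · rintro _ ⟨x, rfl⟩ _ ⟨u₁, hu₁, hs, rfl⟩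
    refine ⟨⟨u₁, rfl⟩, ?_⟩
    simpa [SyncTracks, cayleyDist, pathOf_of_length_le, hu₁] using hs x.length
  · change x ++ y ∈ syncLang π ρ N D Acc ↔ _
    rw [append_mem_syncLang_iff]
    constructor
    · rintro ⟨u₁, hu₁, hs₁, hrest⟩
      exact ⟨_, ⟨u₁, hu₁, hs₁, rfl⟩, hrest⟩
    · rintro ⟨_, ⟨u₁, hu₁, hs₁, rfl⟩, hrest⟩
      exact ⟨u₁, hu₁, hs₁, hrest⟩

def syncFellows (π : A → G) (L : Language A) (D : ℕ) : Language A :=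
  {v | ∃ u ∈ L, v.length ≤ u.length ∧ evalWord π u = evalWord π v ∧
    SyncTracks π D (pathOf π v) (pathOf π u)}

lemma syncFellows_eq_syncLang (L : Language A) (D : ℕ) :
    syncFellows π L D = syncLang π π L D fun Q g =>
      ∃ r ∈ Q, g * evalWord π r = 1 ∧ SyncTracks π D (pathOf π []) fun s => g * pathOf π r s := by
  ext v
  constructor
  · rintro ⟨u, hu, hlen, he, hs⟩
    have hu₁ : (u.take v.length).length = v.length := by simp [hlen]
    replace hs : SyncTracks π D (pathOf π (v ++ []))
        (pathOf π (u.take v.length ++ u.drop v.length)) := by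
      rwa [List.append_nil, List.take_append_drop]
    rw [syncTracks_append_iff hu₁] at hs
    refine ⟨_, hu₁, hs.1, u.drop v.length, ?_, ?_, hs.2⟩
    · simpa using hu
    · rw [mul_assoc, ← evalWord_append, List.take_append_drop, he, inv_mul_cancel]
  · rintro ⟨u₁, hu₁, hs₁, r, hr, he, hs₂⟩
    refine ⟨u₁ ++ r, hr, by simp [hu₁], ?_, ?_⟩
    · rw [mul_assoc, inv_mul_eq_one, ← evalWord_append] at he
      exact he.symm
    · rw [← v.append_nil]
      exact (syncTracks_append_iff hu₁).2 ⟨hs₁, hs₂⟩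

lemma isRegular_syncFellows [Finite A] (hgen : Generates π) {L : Language A}
    (hL : L.IsRegular) (D : ℕ) : (syncFellows π L D).IsRegular := by
  rw [syncFellows_eq_syncLang]
  exact isRegular_syncLang hgen hL D _

end SyncLanguages

section GeodesicLanguage

variable {π : A → G} {D : ℕ} {v w : List A}

/-- The padding letter `none` lets a shorter word be guessed letter by letter alongside `w`. -/
def shortcutLang (π : A → G) (D : ℕ) : Language A :=
  syncLang π (Option.elim' 1 π) {u | none ∈ u} D fun Q g => [] ∈ Q ∧ g = 1

lemma evalWord_elim' (π : A → G) (u : List (Option A)) :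
    evalWord (Option.elim' 1 π) u = evalWord π u.reduceOption := by
  induction u with
  | nil => rfl
  | cons o u ih => cases o <;> simp [ih, List.reduceOption_cons_of_some,
      List.reduceOption_cons_of_none]

lemma pathOf_elim'_map_some_append_replicate (π : A → G) (v : List A) (k : ℕ) :
    pathOf (Option.elim' 1 π) (v.map some ++ List.replicate k none) = pathOf π v := by
  funext t
  simp [pathOf, evalWord, List.take_append, List.map_take, Function.comp_def]

lemma not_isGeodesicWord_of_mem_shortcutLang (hw : w ∈ shortcutLang π D) :
    ¬ IsGeodesicWord π w := by
  obtain ⟨u, hlen, -, hnone, he⟩ := hw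
  replace hnone : none ∈ u ++ [] := hnone
  have hlt : u.reduceOption.length < u.length :=
    List.reduceOption_length_lt_iff.2 (by simpa using hnone)
  rw [inv_mul_eq_one, evalWord_elim'] at he
  have := wordLen_le_length π u.reduceOption
  rw [IsGeodesicWord, he]
  omega

lemma mem_shortcutLang (hlt : v.length < w.length) (he : evalWord π v = evalWord π w)
    (hs : SyncTracks π D (pathOf π w) (pathOf π v)) : w ∈ shortcutLang π D := by
  refine ⟨v.map some ++ List.replicate (w.length - v.length) none, by simp; omega, ?_, ?_, ?_⟩
  · rwa [pathOf_elim'_map_some_append_replicate]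
  · change none ∈ _ ++ []
    simp
    omega
  · rw [inv_mul_eq_one, ← he]
    simp [evalWord, Function.comp_def]

lemma isGeodesicWord_iff_mem_avoidingPrefixes (hgen : Generates π) {S : Language A}
    (hS : ∀ w ∈ S, ¬ IsGeodesicWord π w)
    (hS' : ∀ x a, IsGeodesicWord π x → ¬ IsGeodesicWord π (x ++ [a]) → x ++ [a] ∈ S) (w : List A) :
    IsGeodesicWord π w ↔ w ∈ S.avoidingPrefixes := by
  refine ⟨fun hw n hn => hS _ hn (hw.take hgen n), fun hw => ?_⟩
  suffices ∀ n, IsGeodesicWord π (w.take n) by simpa using this w.length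
  intro n
  induction n with
  | zero => simpa using isGeodesicWord_nil
  | succ n ih =>
    rw [List.take_add_one]
    cases h : w[n]? with
    | none => simpa using ih
    | some a =>
      by_contra hna
      exact hw (n + 1) (by rw [List.take_add_one, h]; exact hS' _ a ih hna)

lemma length_append_singleton_le [Fintype A] (hgen : Generates π) {x : List A}
    (hx : IsGeodesicWord π x) (a : A) :
    (x ++ [a]).length ≤ wordLen π (evalWord π (x ++ [a])) + (invConst π + 1) := by
  have := wordLen_mul_le hgen (evalWord π (x ++ [a])) (π a)⁻¹
  have := wordLen_inv_generator_le π a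
  simp only [evalWord_append, evalWord_singleton, mul_inv_cancel_right] at *
  rw [IsGeodesicWord] at hx
  simp only [List.length_append, List.length_singleton]
  omega

lemma isRegular_setOf_isGeodesicWord [Fintype A] {δ : ℕ} (hgen : Generates π)
    (hfftp : FFTP π δ) : Language.IsRegular ({w | IsGeodesicWord π w} : Language A) := by
  obtain ⟨D, hD⟩ := exists_syncTracks_geodesic hgen hfftp (invConst π + 1)
  have : ({w | IsGeodesicWord π w} : Language A) = (shortcutLang π D).avoidingPrefixes := by
    refine Set.ext <| isGeodesicWord_iff_mem_avoidingPrefixes hgen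
      (fun _ => not_isGeodesicWord_of_mem_shortcutLang) fun x a hx hxa => ?_
    obtain ⟨v, hv, he, hs⟩ := hD _ (length_append_singleton_le hgen hx a)
    exact mem_shortcutLang (hv.length_lt he hxa) he hs
  rw [this]
  exact (isRegular_syncLang hgen (Language.isRegular_setOf_mem none) D _).avoidingPrefixes

end GeodesicLanguage

section Structures

variable [Fintype A] {π : A → G} {δ D : ℕ} {L L' : Language A}

lemma SyncFT.of_forall_mem_syncFellows (hgen : Generates π) (hL : SyncFT π δ L)
    (hL' : ∀ v ∈ L', v ∈ syncFellows π L D) : SyncFT π (D + δ + invConst π * D) L' := by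
  intro u' hu' v' hv' hrel
  obtain ⟨u, hu, -, hue, hu'u⟩ := hL' u' hu'
  obtain ⟨v, hv, -, hve, hv'v⟩ := hL' v' hv'
  have huv : SyncTracks π δ (pathOf π u) (pathOf π v) := hL u hu v hv (by rwa [hue, hve])
  exact (hu'u.trans hgen huv).trans hgen (hv'v.symm hgen)

lemma equivStructures_of_forall_mem_syncFellows (hgen : Generates π) (hL : SyncFT π δ L)
    (hL' : ∀ v ∈ L', v ∈ syncFellows π L D) : EquivStructures π L L' := by
  have key : ∀ u ∈ L, ∀ v ∈ L', evalWord π u = evalWord π v →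
      AsyncFellow π (δ + invConst π * D + D) (pathOf π u) (pathOf π v) := by
    intro u hu v hv he
    obtain ⟨w, hw, -, hwe, hvw⟩ := hL' v hv
    have huw : SyncTracks π δ (pathOf π u) (pathOf π w) := hL u hu w hw (.inr (hwe.trans he.symm))
    have hwu : SyncTracks π δ (pathOf π w) (pathOf π u) := hL w hw u hu (.inr (he.trans hwe.symm))
    exact ⟨((huw.trans hgen (hvw.symm hgen)).mono (by omega)).asyncTracks,
      ((hvw.trans hgen hwu).mono (by omega)).asyncTracks⟩
  refine ⟨δ + invConst π * D + D, fun u v huv he => ?_⟩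
  rcases huv with ⟨hu, hv⟩ | ⟨hu, hv⟩
  · exact key u hu v hv he
  · exact (key v hv u hu he.symm).symm

end Structures

/-- **Lemma 5.1.** Over a generating set with the falsification by fellow traveller
property, an almost geodesic automatic structure is equivalent to a geodesic one. -/
theorem almost_geodesic_to_geodesic {A G : Type*} [Fintype A] [Group G]
    (π : A → G) (hgen : Generates π) (δ : ℕ) (hfftp : FFTP π δ)
    (L : Language A) (hL : IsAutomaticStructure π L)
    (K : ℕ) (halmost : ∀ u ∈ L, u.length ≤ wordLen π (evalWord π u) + K) :
    ∃ L' : Language A, IsAutomaticStructure π L' ∧ (∀ w ∈ L', IsGeodesicWord π w) ∧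
      EquivStructures π L L' := by
  obtain ⟨hreg, hsurj, δL, hsync⟩ := hL
  obtain ⟨D, hD⟩ := exists_syncTracks_geodesic hgen hfftp K
  let L' := {w | IsGeodesicWord π w} ⊓ syncFellows π L (invConst π * D)
  have hL' : ∀ v ∈ L', v ∈ syncFellows π L (invConst π * D) := fun v hv => hv.2
  have hsurj' : ∀ g : G, ∃ v ∈ L', evalWord π v = g := by
    intro g
    obtain ⟨u, hu, rfl⟩ := hsurj g
    obtain ⟨v, hv, he, hs⟩ := hD u (halmost u hu)
    exact ⟨v, ⟨hv, u, hu, hv.length_le he, he.symm, hs.symm hgen⟩, he⟩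
  refine ⟨L', ⟨?_, hsurj', _, hsync.of_forall_mem_syncFellows hgen hL'⟩, fun w hw => hw.1,
    equivStructures_of_forall_mem_syncFellows hgen hsync hL'⟩
  exact (isRegular_setOf_isGeodesicWord hgen hfftp).inf (isRegular_syncFellows hgen hreg _)
end
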